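/- Let p, q, k_I, k_M be real numbers with 0 ≤ p < 1, 0 < q < 1 and k_M = q·k_I/(1−p), and let b(n) = (P_b^n)₁₁·k_I + (P_b^n)₁₂·k_M. Then the series Σ_{n=0}^∞ b(n) converges and equals k_I/(1−p) + k_M/(1−q), which in turn equals k_M/(q·(1−q)). -/

import Mathlib

/-!
Starting from state `0`, the chain stays with probability `p` and otherwise moves to state `1`,
which it leaves for good with probability `1 - q`. Hence `(P_b ^ n)₀₀ = pⁿ` and
`(P_b ^ n)₀₁ = (1 - p) ∑_{i < n} pⁱ q^(n-1-i)`, the latter being `1 - p` times a Cauchy product of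
two geometric series; summing gives `∑ (P_b ^ n)₀₀ = 1/(1 - p)` and `∑ (P_b ^ n)₀₁ = 1/(1 - q)`.
The closed form `k_M/(q(1 - q))` is then the identity `k_I/(1 - p) = k_M/q`.
-/

open Matrix

noncomputable def Pb (p q : ℝ) : Matrix (Fin 3) (Fin 3) ℝ :=
  !![p, 1 - p, 0; 0, q, 1 - q; 0, 0, 1]

open Finset

theorem hasSum_geom_sum₂ {K : Type*} [NormedField K] [CompleteSpace K] {x y : K}
    (hx : ‖x‖ < 1) (hy : ‖y‖ < 1) :
    HasSum (fun n ↦ ∑ i ∈ range n, x ^ i * y ^ (n - 1 - i)) ((1 - x)⁻¹ * (1 - y)⁻¹) := by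
  have hcauchy := hasSum_sum_range_mul_of_summable_norm
    (summable_norm_geometric_of_norm_lt_one hx) (summable_norm_geometric_of_norm_lt_one hy)
  rw [tsum_geometric_of_norm_lt_one hx, tsum_geometric_of_norm_lt_one hy] at hcauchy
  rw [← hasSum_nat_add_iff' 1]
  simpa using hcauchy

section Pb

variable (p q : ℝ)

theorem Pb_pow_succ_apply_zero_zero (n : ℕ) :
    (Pb p q ^ (n + 1)) 0 0 = (Pb p q ^ n) 0 0 * p := by
  simp [pow_succ, mul_apply, Fin.sum_univ_three, Pb]

theorem Pb_pow_succ_apply_zero_one (n : ℕ) :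
    (Pb p q ^ (n + 1)) 0 1 = (Pb p q ^ n) 0 0 * (1 - p) + (Pb p q ^ n) 0 1 * q := by
  simp [pow_succ, mul_apply, Fin.sum_univ_three, Pb]

theorem Pb_pow_apply_zero_zero (n : ℕ) : (Pb p q ^ n) 0 0 = p ^ n := by
  induction n with
  | zero => simp
  | succ n ih => rw [Pb_pow_succ_apply_zero_zero, ih, pow_succ]

theorem Pb_pow_apply_zero_one (n : ℕ) :
    (Pb p q ^ n) 0 1 = (1 - p) * ∑ i ∈ range n, p ^ i * q ^ (n - 1 - i) := by
  induction n with
  | zero => simp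
  | succ n ih =>
    rw [Pb_pow_succ_apply_zero_one, Pb_pow_apply_zero_zero, ih, Nat.add_sub_cancel,
      geom_sum₂_succ_eq]
    ring

variable {p q}

theorem hasSum_Pb_pow_apply_zero_zero (hp : |p| < 1) :
    HasSum (fun n ↦ (Pb p q ^ n) 0 0) (1 - p)⁻¹ := by
  simpa only [Pb_pow_apply_zero_zero] using hasSum_geometric_of_abs_lt_one hp

theorem hasSum_Pb_pow_apply_zero_one (hp : |p| < 1) (hq : |q| < 1) :
    HasSum (fun n ↦ (Pb p q ^ n) 0 1) (1 - q)⁻¹ := by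
  have hp1 : 1 - p ≠ 0 := sub_ne_zero.2 (abs_lt.1 hp).2.ne'
  simp only [Pb_pow_apply_zero_one]
  simpa only [mul_inv_cancel_left₀ hp1] using (hasSum_geom_sum₂ hp hq).mul_left (1 - p)

end Pb

theorem stmt_6 (p q kI kM : ℝ) (hp0 : 0 ≤ p) (hp1 : p < 1) (hq0 : 0 < q) (hq1 : q < 1)
    (hkM : kM = q * kI / (1 - p))
    (b : ℕ → ℝ) (hb : ∀ n, b n = (Pb p q ^ n) 0 0 * kI + (Pb p q ^ n) 0 1 * kM) :
    HasSum b (kI / (1 - p) + kM / (1 - q)) ∧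
      kI / (1 - p) + kM / (1 - q) = kM / (q * (1 - q)) := by
  have hp : |p| < 1 := abs_lt.2 ⟨by linarith, hp1⟩
  have hq : |q| < 1 := abs_lt.2 ⟨by linarith, hq1⟩
  obtain rfl : b = _ := funext hb
  refine ⟨?_, ?_⟩
  · simpa only [div_eq_inv_mul, mul_comm _ kI, mul_comm _ kM] using
      ((hasSum_Pb_pow_apply_zero_zero hp).mul_right kI).add ((hasSum_Pb_pow_apply_zero_one hp hq).mul_right kM)
  · have hp1' : 1 - p ≠ 0 := by linarith
    have hq1' : 1 - q ≠ 0 := by linarith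
    subst hkM
    field_simp
    ring
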